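/- Let p be a prime and β ≥ 1 an integer. Let A = { h ∈ ι(H(ℚ_p)) : γ⁻¹·h·γ ∈ K_Kl(p^β) } and B = { h ∈ ι(H(ℚ_p)) : γ̂⁻¹·h·γ̂ ∈ K_B(p^β) }. Then B is a subgroup of A of index p^β; more precisely, the matrices δ_a = I + a·E₂₃ for a ∈ {0, 1, …, p^β − 1} (where E₂₃ has a single nonzero entry 1 in position (2,3)) all lie in A, the cosets δ_a·B are pairwise disjoint, and their union is A. -/

import Mathlib

open Matrix

noncomputable section

/-- The Weyl representative `w₁`. -/
def w1 (R : Type*) [CommRing R] : Matrix (Fin 4) (Fin 4) R :=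
  !![1, 0, 0, 0;
     0, 0, 1, 0;
     0, -1, 0, 0;
     0, 0, 0, 1]

/-- The matrix `γ`. -/
def gammaMat (R : Type*) [CommRing R] : Matrix (Fin 4) (Fin 4) R :=
  !![1, 0, 0, 0;
     1, 1, 0, 0;
     0, 0, 1, 0;
     0, 0, -1, 1]

/-- The matrix `γ̂ = γ·w₁`. -/
def gammaHat (R : Type*) [CommRing R] : Matrix (Fin 4) (Fin 4) R :=
  gammaMat R * w1 R

/-- The embedding `ι` of a pair of 2×2 matrices into 4×4 matrices. -/
def iotaMat {K : Type*} [CommRing K] (h₁ h₂ : Matrix (Fin 2) (Fin 2) K) :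
    Matrix (Fin 4) (Fin 4) K :=
  !![h₁ 0 0, 0, 0, h₁ 0 1;
     0, h₂ 0 0, h₂ 0 1, 0;
     0, h₂ 1 0, h₂ 1 1, 0;
     h₁ 1 0, 0, 0, h₁ 1 1]

/-- Membership in `GL_n(ℤ_p)` for a matrix over `ℚ_p`: integral entries and unit determinant. -/
def InGLZp {p : ℕ} [Fact p.Prime] {n : ℕ} (g : Matrix (Fin n) (Fin n) ℚ_[p]) : Prop :=
  (∀ i j, ‖g i j‖ ≤ 1) ∧ ‖g.det‖ = 1

/-- The depth-`p^β` Iwahori `K_B(p^β) ⊂ GL₄(ℤ_p)`. -/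
def KB (p : ℕ) [Fact p.Prime] (β : ℕ) : Set (Matrix (Fin 4) (Fin 4) ℚ_[p]) :=
  {g | InGLZp g ∧
    ‖g 1 0‖ ≤ (p : ℝ) ^ (-(β : ℤ)) ∧ ‖g 2 0‖ ≤ (p : ℝ) ^ (-(β : ℤ)) ∧
    ‖g 2 1‖ ≤ (p : ℝ) ^ (-(β : ℤ)) ∧ ‖g 3 0‖ ≤ (p : ℝ) ^ (-(β : ℤ)) ∧
    ‖g 3 1‖ ≤ (p : ℝ) ^ (-(β : ℤ)) ∧ ‖g 3 2‖ ≤ (p : ℝ) ^ (-(β : ℤ))}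

/-- The depth-`p^β` Klingen parahoric `K_Kl(p^β) ⊂ GL₄(ℤ_p)`. -/
def KKl (p : ℕ) [Fact p.Prime] (β : ℕ) : Set (Matrix (Fin 4) (Fin 4) ℚ_[p]) :=
  {g | InGLZp g ∧
    ‖g 1 0‖ ≤ (p : ℝ) ^ (-(β : ℤ)) ∧ ‖g 2 0‖ ≤ (p : ℝ) ^ (-(β : ℤ)) ∧
    ‖g 3 0‖ ≤ (p : ℝ) ^ (-(β : ℤ)) ∧ ‖g 3 1‖ ≤ (p : ℝ) ^ (-(β : ℤ)) ∧
    ‖g 3 2‖ ≤ (p : ℝ) ^ (-(β : ℤ))}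

/-- The image `ι(H(ℚ_p))`: matrices `ι(h₁,h₂)` for invertible `h₁, h₂` with equal determinant. -/
def iotaHSet (p : ℕ) [Fact p.Prime] : Set (Matrix (Fin 4) (Fin 4) ℚ_[p]) :=
  {g | ∃ h₁ h₂ : Matrix (Fin 2) (Fin 2) ℚ_[p],
    IsUnit h₁.det ∧ IsUnit h₂.det ∧ h₁.det = h₂.det ∧ g = iotaMat h₁ h₂}

/-- `A = { h ∈ ι(H(ℚ_p)) : γ⁻¹·h·γ ∈ K_Kl(p^β) }`. -/
def Aset (p : ℕ) [Fact p.Prime] (β : ℕ) : Set (Matrix (Fin 4) (Fin 4) ℚ_[p]) :=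
  {g | g ∈ iotaHSet p ∧ (gammaMat ℚ_[p])⁻¹ * g * gammaMat ℚ_[p] ∈ KKl p β}

/-- `B = { h ∈ ι(H(ℚ_p)) : γ̂⁻¹·h·γ̂ ∈ K_B(p^β) }`. -/
def Bset (p : ℕ) [Fact p.Prime] (β : ℕ) : Set (Matrix (Fin 4) (Fin 4) ℚ_[p]) :=
  {g | g ∈ iotaHSet p ∧ (gammaHat ℚ_[p])⁻¹ * g * gammaHat ℚ_[p] ∈ KB p β}

/-- The coset representatives `δ_a = I + a·E₂₃`. -/
def deltaA (p : ℕ) [Fact p.Prime] (a : ℕ) : Matrix (Fin 4) (Fin 4) ℚ_[p] :=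
  1 + (a : ℚ_[p]) • Matrix.single 1 2 1

/-!
For `g ∈ ι(H(ℚ_p))` write `m = γ⁻¹ g γ` (indices from 0, as in Lean). Since `γ̂ = γ w₁` and
conjugation by `w₁` permutes the indices 1, 2 up to sign, `g ∈ B` iff `g ∈ A` and
`‖m 1 2‖ ≤ p^(-β)`. A transvection `δ_c = I + c E₁₂` with `c ∈ ℤ_p` commutes with `γ⁻¹`, so it
preserves `A` and replaces `m 1 2` by `m 1 2 + c m 2 2`. For `g = ι(h₁, h₂) ∈ A` the entry
`m 2 2 = h₂ 1 1` is a unit, because `h₂` is integral with unit determinant and `h₂ 1 0 ≡ 0`.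
Hence `δ_c g ∈ B` iff `c ≡ -m 1 2 / m 2 2 mod p^β`, so every `g ∈ A` lies in `δ_a B` for exactly
one `0 ≤ a < p^β`.
-/

namespace IsUltrametricDist

variable {S : Type*} [SeminormedAddCommGroup S] [IsUltrametricDist S] {x y : S} {r : ℝ}

lemma norm_add_le_of_le_of_le (hx : ‖x‖ ≤ r) (hy : ‖y‖ ≤ r) : ‖x + y‖ ≤ r :=
  (norm_add_le_max x y).trans (max_le hx hy)

lemma norm_sub_le_of_le_of_le (hx : ‖x‖ ≤ r) (hy : ‖y‖ ≤ r) : ‖x - y‖ ≤ r := by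
  simpa [sub_eq_add_neg] using norm_add_le_of_le_of_le hx (by rwa [norm_neg])

end IsUltrametricDist

open IsUltrametricDist

lemma Matrix.norm_one_one_eq_one {K : Type*} [NormedField K] [IsUltrametricDist K]
    {h : Matrix (Fin 2) (Fin 2) K} (hint : ∀ i j, ‖h i j‖ ≤ 1) (hdet : ‖h.det‖ = 1)
    (h10 : ‖h 1 0‖ < 1) : ‖h 1 1‖ = 1 := by
  have h01_10 : ‖h 0 1 * h 1 0‖ < 1 := by
    rw [norm_mul]; exact mul_lt_one_of_nonneg_of_lt_one_right (hint 0 1) (norm_nonneg _) h10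
  have h00_11 : 1 ≤ ‖h 0 0 * h 1 1‖ := by
    by_contra! hlt
    have : ‖h.det‖ < 1 := by
      rw [det_fin_two, sub_eq_add_neg]
      exact (norm_add_le_max _ _).trans_lt (max_lt hlt (by rwa [norm_neg]))
    exact this.ne hdet
  rw [norm_mul] at h00_11
  exact le_antisymm (hint 1 1) (by nlinarith [hint 0 0, norm_nonneg (h 1 1)])

section CommRing

variable {R : Type*} [CommRing R]

lemma gammaMat_mul_eq_one :
    gammaMat R * !![1, 0, 0, 0; -1, 1, 0, 0; 0, 0, 1, 0; 0, 0, 1, 1] = 1 := by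
  ext i j; fin_cases i <;> fin_cases j <;> simp [gammaMat, mul_apply, Fin.sum_univ_four]

lemma gammaMat_inv : (gammaMat R)⁻¹ = !![1, 0, 0, 0; -1, 1, 0, 0; 0, 0, 1, 0; 0, 0, 1, 1] :=
  inv_eq_right_inv gammaMat_mul_eq_one

lemma isUnit_gammaMat : IsUnit (gammaMat R) :=
  (isUnit_iff_isUnit_det _).mpr (isUnit_det_of_right_inverse gammaMat_mul_eq_one)

lemma w1_mul_transpose : w1 R * (w1 R)ᵀ = 1 := by
  ext i j; fin_cases i <;> fin_cases j <;> simp [w1, mul_apply, Fin.sum_univ_four]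

lemma w1_inv : (w1 R)⁻¹ = (w1 R)ᵀ := inv_eq_right_inv w1_mul_transpose

lemma isUnit_w1 : IsUnit (w1 R) :=
  (isUnit_iff_isUnit_det _).mpr (isUnit_det_of_right_inverse w1_mul_transpose)

lemma gammaHat_conj (g : Matrix (Fin 4) (Fin 4) R) :
    (gammaHat R)⁻¹ * g * gammaHat R = (w1 R)⁻¹ * ((gammaMat R)⁻¹ * g * gammaMat R) * w1 R := by
  simp only [gammaHat, Matrix.mul_inv_rev, Matrix.mul_assoc]

lemma gammaMat_conj_one : (gammaMat R)⁻¹ * 1 * gammaMat R = 1 := by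
  rw [Matrix.mul_one, gammaMat_inv]
  exact mul_eq_one_comm.mp gammaMat_mul_eq_one

lemma gammaMat_conj_transvection_mul (c : R) (g : Matrix (Fin 4) (Fin 4) R) :
    (gammaMat R)⁻¹ * (transvection 1 2 c * g) * gammaMat R =
      transvection 1 2 c * ((gammaMat R)⁻¹ * g * gammaMat R) := by
  have : (gammaMat R)⁻¹ * transvection 1 2 c = transvection 1 2 c * (gammaMat R)⁻¹ := by
    rw [gammaMat_inv]
    ext i j
    fin_cases i <;> fin_cases j <;>
      simp [transvection, mul_apply, Fin.sum_univ_four, one_apply, single_apply]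
  rw [← Matrix.mul_assoc, this, Matrix.mul_assoc, Matrix.mul_assoc, Matrix.mul_assoc]

lemma gammaMat_conj_iotaMat (h₁ h₂ : Matrix (Fin 2) (Fin 2) R) :
    (gammaMat R)⁻¹ * iotaMat h₁ h₂ * gammaMat R =
      !![h₁ 0 0, 0, -h₁ 0 1, h₁ 0 1;
         h₂ 0 0 - h₁ 0 0, h₂ 0 0, h₂ 0 1 + h₁ 0 1, -h₁ 0 1;
         h₂ 1 0, h₂ 1 0, h₂ 1 1, 0;
         h₂ 1 0 + h₁ 1 0, h₂ 1 0, h₂ 1 1 - h₁ 1 1, h₁ 1 1] := by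
  rw [gammaMat_inv]
  ext i j
  fin_cases i <;> fin_cases j <;> simp [iotaMat, gammaMat, mul_apply, Fin.sum_univ_four] <;> ring

lemma det_iotaMat (h₁ h₂ : Matrix (Fin 2) (Fin 2) R) :
    (iotaMat h₁ h₂).det = h₁.det * h₂.det := by
  simp [iotaMat, det_succ_row_zero, Fin.sum_univ_succ, Fin.succAbove]
  ring

lemma iotaMat_one : iotaMat (1 : Matrix (Fin 2) (Fin 2) R) 1 = 1 := by
  ext i j; fin_cases i <;> fin_cases j <;> simp [iotaMat]

lemma transvection_mul_iotaMat (c : R) (h₁ h₂ : Matrix (Fin 2) (Fin 2) R) :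
    transvection 1 2 c * iotaMat h₁ h₂ = iotaMat h₁ (transvection 0 1 c * h₂) := by
  ext i j
  fin_cases i <;> fin_cases j <;>
    simp [iotaMat, transvection, mul_apply, Fin.sum_univ_four, Fin.sum_univ_two, one_apply,
      single_apply]

end CommRing

lemma norm_w1_conj_apply {R : Type*} [NormedCommRing R] (M : Matrix (Fin 4) (Fin 4) R)
    (i j : Fin 4) :
    ‖((w1 R)⁻¹ * M * w1 R) i j‖ = ‖M (Equiv.swap 1 2 i) (Equiv.swap 1 2 j)‖ := by
  rw [w1_inv]
  fin_cases i <;> fin_cases j <;>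
    simp [w1, mul_apply, Fin.sum_univ_four, Equiv.swap_apply_of_ne_of_ne]

lemma deltaA_eq_transvection (p : ℕ) [Fact p.Prime] (a : ℕ) :
    deltaA p a = transvection 1 2 (a : ℚ_[p]) := by
  simp [deltaA, transvection, smul_single]

section Padic

variable {p : ℕ} [Fact p.Prime] {β : ℕ}

lemma Padic.exists_natCast_lt_norm_sub_le {z : ℚ_[p]} (hz : ‖z‖ ≤ 1) (β : ℕ) :
    ∃ a < p ^ β, ‖z - a‖ ≤ (p : ℝ) ^ (-(β : ℤ)) := by
  set x : ℤ_[p] := ⟨z, hz⟩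
  refine ⟨x.appr β, x.appr_lt β, ?_⟩
  simpa [PadicInt.norm_def] using
    (PadicInt.norm_le_pow_iff_mem_span_pow _ β).mpr (x.appr_spec β)

lemma Padic.eq_of_norm_natCast_sub_le {a b : ℕ} (ha : a < p ^ β) (hb : b < p ^ β)
    (hab : ‖(a : ℚ_[p]) - b‖ ≤ (p : ℝ) ^ (-(β : ℤ))) : a = b := by
  have hdvd : (p ^ β : ℤ) ∣ (a : ℤ) - b := by
    rw [← Padic.norm_int_le_pow_iff_dvd]; exact_mod_cast hab
  exact Nat.ModEq.eq_of_lt_of_lt ((Nat.modEq_iff_dvd.mpr (by exact_mod_cast hdvd)).symm) ha hb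

lemma w1_conj_mem_KB_iff (M : Matrix (Fin 4) (Fin 4) ℚ_[p]) :
    (w1 ℚ_[p])⁻¹ * M * w1 ℚ_[p] ∈ KB p β ↔ M ∈ KKl p β ∧ ‖M 1 2‖ ≤ (p : ℝ) ^ (-(β : ℤ)) := by
  have hint : (∀ i j, ‖M (Equiv.swap 1 2 i) (Equiv.swap 1 2 j)‖ ≤ 1) ↔ ∀ i j, ‖M i j‖ ≤ 1 :=
    ⟨fun h i j ↦ by simpa using h (Equiv.swap 1 2 i) (Equiv.swap 1 2 j), fun h _ _ ↦ h _ _⟩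
  simp only [KB, KKl, InGLZp, Set.mem_ofPred_eq, norm_w1_conj_apply, hint, det_conj' isUnit_w1,
    Equiv.swap_apply_left, Equiv.swap_apply_right,
    Equiv.swap_apply_of_ne_of_ne (show (0 : Fin 4) ≠ 1 by decide) (show (0 : Fin 4) ≠ 2 by decide),
    Equiv.swap_apply_of_ne_of_ne (show (3 : Fin 4) ≠ 1 by decide) (show (3 : Fin 4) ≠ 2 by decide)]
  tauto

lemma transvection_mul_mem_KKl {M : Matrix (Fin 4) (Fin 4) ℚ_[p]} (hM : M ∈ KKl p β)
    {c : ℚ_[p]} (hc : ‖c‖ ≤ 1) : transvection 1 2 c * M ∈ KKl p β := by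
  obtain ⟨⟨hint, hdet⟩, h10, h20, h30, h31, h32⟩ := hM
  have hrow : ∀ i j, i ≠ 1 → (transvection (1 : Fin 4) 2 c * M) i j = M i j :=
    fun i j hi ↦ by simp [hi]
  have hrow₁ : ∀ j {r : ℝ}, ‖M 1 j‖ ≤ r → ‖M 2 j‖ ≤ r →
      ‖(transvection (1 : Fin 4) 2 c * M) 1 j‖ ≤ r :=
    fun j _ h₁ h₂ ↦ by
      rw [transvection_mul_apply_same]
      exact norm_add_le_of_le_of_le h₁ (by simpa using norm_mul_le_of_le hc h₂)
  refine ⟨⟨fun i j ↦ ?_, by simpa [det_mul] using hdet⟩, hrow₁ 0 h10 h20, ?_, ?_, ?_, ?_⟩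
  · by_cases hi : i = 1
    · subst hi; exact hrow₁ j (hint 1 j) (hint 2 j)
    · rw [hrow i j hi]; exact hint i j
  all_goals rw [hrow _ _ (by decide)]; assumption

lemma one_mem_Aset : (1 : Matrix (Fin 4) (Fin 4) ℚ_[p]) ∈ Aset p β := by
  refine ⟨⟨1, 1, by simp, by simp, rfl, iotaMat_one.symm⟩, ?_⟩
  rw [gammaMat_conj_one]
  refine ⟨⟨fun i j ↦ ?_, by simp⟩, ?_⟩
  · rw [one_apply]; split_ifs <;> simp
  · simp

lemma transvection_mul_mem_Aset {g : Matrix (Fin 4) (Fin 4) ℚ_[p]} (hg : g ∈ Aset p β)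
    {c : ℚ_[p]} (hc : ‖c‖ ≤ 1) : transvection 1 2 c * g ∈ Aset p β := by
  obtain ⟨⟨h₁, h₂, hu₁, hu₂, hdet, rfl⟩, hK⟩ := hg
  refine ⟨⟨h₁, transvection 0 1 c * h₂, hu₁, by simpa using hu₂, by simpa using hdet,
    transvection_mul_iotaMat c h₁ h₂⟩, ?_⟩
  rw [gammaMat_conj_transvection_mul]
  exact transvection_mul_mem_KKl hK hc

lemma Bset_eq : Bset p β =
    {g ∈ Aset p β | ‖((gammaMat ℚ_[p])⁻¹ * g * gammaMat ℚ_[p]) 1 2‖ ≤ (p : ℝ) ^ (-(β : ℤ))} := by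
  ext g
  simp only [Bset, Aset, Set.mem_ofPred_eq, gammaHat_conj, w1_conj_mem_KB_iff, and_assoc]

lemma norm_gammaMat_conj_two_two (hβ : 1 ≤ β) {g : Matrix (Fin 4) (Fin 4) ℚ_[p]}
    (hg : g ∈ Aset p β) : ‖((gammaMat ℚ_[p])⁻¹ * g * gammaMat ℚ_[p]) 2 2‖ = 1 := by
  obtain ⟨⟨h₁, h₂, -, -, hdet, rfl⟩, ⟨hint, hdetM⟩, -, h20, -, -, -⟩ := hg
  rw [det_conj' isUnit_gammaMat, det_iotaMat, hdet, ← sq, norm_pow,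
    pow_eq_one_iff_of_nonneg (norm_nonneg _) two_ne_zero] at hdetM
  simp only [gammaMat_conj_iotaMat] at hint h20 ⊢
  have h₂int : ∀ i j, ‖h₂ i j‖ ≤ 1 := by
    intro i j
    fin_cases i <;> fin_cases j
    · simpa using hint 1 1
    · simpa using norm_add_le_of_le_of_le (hint 1 2) (hint 1 3)
    · simpa using hint 2 0
    · simpa using hint 2 2
  simp only [of_apply, cons_val, cons_val_zero] at h20 ⊢
  exact norm_one_one_eq_one h₂int hdetM (h20.trans_lt
    (zpow_lt_one_of_neg₀ (by exact_mod_cast (Fact.out : p.Prime).one_lt) (by omega)))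

lemma transvection_mul_mem_Bset_iff (hβ : 1 ≤ β) {g : Matrix (Fin 4) (Fin 4) ℚ_[p]}
    (hg : g ∈ Aset p β) {c : ℚ_[p]} (hc : ‖c‖ ≤ 1) :
    transvection 1 2 c * g ∈ Bset p β ↔
      ‖((gammaMat ℚ_[p])⁻¹ * g * gammaMat ℚ_[p]) 1 2 /
        ((gammaMat ℚ_[p])⁻¹ * g * gammaMat ℚ_[p]) 2 2 + c‖ ≤ (p : ℝ) ^ (-(β : ℤ)) := by
  set M := (gammaMat ℚ_[p])⁻¹ * g * gammaMat ℚ_[p]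
  have hM : ‖M 2 2‖ = 1 := norm_gammaMat_conj_two_two hβ hg
  have hM₀ : M 2 2 ≠ 0 := norm_ne_zero_iff.mp (by rw [hM]; exact one_ne_zero)
  rw [Bset_eq, Set.mem_sep_iff, and_iff_right (transvection_mul_mem_Aset hg hc),
    gammaMat_conj_transvection_mul, transvection_mul_apply_same,
    show M 1 2 + c * M 2 2 = (M 1 2 / M 2 2 + c) * M 2 2 by field_simp, norm_mul, hM, mul_one]

end Padic

theorem stmt15 (p : ℕ) [Fact p.Prime] (β : ℕ) (hβ : 1 ≤ β) :
    Bset p β ⊆ Aset p β ∧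
    (∀ a : ℕ, a < p ^ β → deltaA p a ∈ Aset p β) ∧
    (∀ a b : ℕ, a < p ^ β → b < p ^ β → a ≠ b →
      ∀ x ∈ Bset p β, ∀ y ∈ Bset p β, deltaA p a * x ≠ deltaA p b * y) ∧
    (∀ g ∈ Aset p β, ∃ a : ℕ, a < p ^ β ∧ ∃ x ∈ Bset p β, g = deltaA p a * x) := by
  have hBA : Bset p β ⊆ Aset p β := by rw [Bset_eq]; exact Set.sep_subset _ _
  have ht (c d : ℚ_[p]) : transvection (1 : Fin 4) 2 c * transvection 1 2 d =
      transvection 1 2 (c + d) :=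
    transvection_mul_transvection_same (i := (1 : Fin 4)) (j := 2) (by decide) c d
  refine ⟨hBA, fun a _ ↦ ?_, ?_, ?_⟩
  · rw [deltaA_eq_transvection, ← Matrix.mul_one (transvection _ _ _)]
    exact transvection_mul_mem_Aset one_mem_Aset (norm_natCast_le_one ℚ_[p] a)
  · intro a b ha hb hab x hx y hy hxy
    simp only [deltaA_eq_transvection] at hxy
    have hy_eq : y = transvection 1 2 ((a : ℚ_[p]) - b) * x := by
      rw [sub_eq_neg_add, ← ht, Matrix.mul_assoc, hxy, ← Matrix.mul_assoc, ht, neg_add_cancel,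
        transvection_zero, Matrix.one_mul]
    have hx₀ := (transvection_mul_mem_Bset_iff hβ (hBA hx) (c := 0) (by simp)).mp
      (by simpa using hx)
    have hxy₀ := (transvection_mul_mem_Bset_iff hβ (hBA hx) (norm_sub_le_of_le_of_le
      (norm_natCast_le_one ℚ_[p] a) (norm_natCast_le_one ℚ_[p] b))).mp (hy_eq ▸ hy)
    exact hab (Padic.eq_of_norm_natCast_sub_le ha hb
      (by simpa using norm_sub_le_of_le_of_le hxy₀ hx₀))
  · intro g hg
    set M := (gammaMat ℚ_[p])⁻¹ * g * gammaMat ℚ_[p]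
    have hz : ‖M 1 2 / M 2 2‖ ≤ 1 := by
      rw [norm_div, norm_gammaMat_conj_two_two hβ hg, div_one]; exact hg.2.1.1 1 2
    obtain ⟨a, ha, hza⟩ := Padic.exists_natCast_lt_norm_sub_le hz β
    have ha₁ : ‖-(a : ℚ_[p])‖ ≤ 1 := by rw [norm_neg]; exact norm_natCast_le_one ℚ_[p] a
    refine ⟨a, ha, transvection 1 2 (-(a : ℚ_[p])) * g,
      (transvection_mul_mem_Bset_iff hβ hg ha₁).mpr (by rwa [← sub_eq_add_neg]), ?_⟩
    rw [deltaA_eq_transvection, ← Matrix.mul_assoc, ht, add_neg_cancel, transvection_zero,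
      Matrix.one_mul]
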